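/- In a well-oriented forest of cacti, every connected component is an Eulerian circuit following the edge orientations, and for any such circuit c = (e₁,…,e_n), the partition σ_c of {1,…,n} defined by i ∼ j iff e_i and e_j lie in the same simple cycle is a noncrossing partition all of whose blocks index the edge sets of simple cycles. -/

import Mathlib

open scoped Classical

/-- A multigraph with edges indexed by `ι`; the `k`-th edge goes from
`(ends k).1` (source) to `(ends k).2` (target).  A *linear graph of order `K`*
in the sense of the paper is an `MGraph (Fin K)`. -/
structure MGraph (ι : Type) where
  V : Type
  [fintV : Fintype V]
  [decV : DecidableEq V]
  ends : ι → V × V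

attribute [instance] MGraph.fintV MGraph.decV

namespace MGraph

variable {ι : Type} [Fintype ι] [DecidableEq ι]

/-- Adjacency using only the edges in `s` (undirected). -/
def adjOn (G : MGraph ι) (s : Set ι) (v w : G.V) : Prop :=
  ∃ e ∈ s, G.ends e = (v, w) ∨ G.ends e = (w, v)

/-- Connectivity (as a setoid) of the subgraph with edge set `s`. -/
def reachSetoid (G : MGraph ι) (s : Set ι) : Setoid G.V :=
  ⟨Relation.EqvGen (G.adjOn s), Relation.EqvGen.is_equivalence _⟩

/-- Number of connected components of the subgraph with edge set `s`
(on the full vertex set). -/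
noncomputable def ncomp (G : MGraph ι) (s : Set ι) : ℕ :=
  Fintype.card (Quotient (G.reachSetoid s))

/-- A cutting edge (bridge): removing it increases the number of connected
components. -/
def IsBridge (G : MGraph ι) (e : ι) : Prop :=
  G.ncomp Set.univ < G.ncomp {x | x ≠ e}

/-- Two vertices are in the same two-edge connected component iff they are
connected using no cutting edge. -/
def tecSetoid (G : MGraph ι) : Setoid G.V := G.reachSetoid {e | ¬ G.IsBridge e}

/-- The forest of two-edge connected components: vertices are the two-edge
connected components, edges are the cutting edges. -/
noncomputable def forest (G : MGraph ι) : MGraph {e : ι // G.IsBridge e} where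
  V := Quotient G.tecSetoid
  ends := fun e => (Quotient.mk _ (G.ends e.1).1, Quotient.mk _ (G.ends e.1).2)

/-- Degree of a vertex (loops counted twice). -/
noncomputable def deg (G : MGraph ι) (v : G.V) : ℕ :=
  (Finset.univ.filter (fun e : ι => (G.ends e).1 = v)).card
  + (Finset.univ.filter (fun e : ι => (G.ends e).2 = v)).card

/-- Number of leaves, with the convention that an isolated vertex counts as
two leaves. -/
noncomputable def leafCount (G : MGraph ι) : ℕ :=
  ∑ v : G.V, if G.deg v = 0 then 2 else if G.deg v = 1 then 1 else 0

/-- `𝔏(G)`: the number of leaves of the forest of two-edge connected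
components of `G` (an isolated two-edge connected component counts twice). -/
noncomputable def LL (G : MGraph ι) : ℕ := G.forest.leafCount

/-- The quotient graph of `G` by a partition (setoid) of its vertex set. -/
noncomputable def quot (G : MGraph ι) (s : Setoid G.V) : MGraph ι where
  V := Quotient s
  ends := fun e => (Quotient.mk s (G.ends e).1, Quotient.mk s (G.ends e).2)

end MGraph

/-- The minimal linear graph `T₀` of order `K`: vertex set `[2K]` is encoded as
`Fin K ⊕ Fin K` (targets `1,…,K` on the left, sources `K+1,…,2K` on the
right), the `k`-th edge going from `K+k` to `k`. -/
def T0 (K : ℕ) : MGraph (Fin K) where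
  V := Fin K ⊕ Fin K
  ends := fun k => (Sum.inr k, Sum.inl k)

namespace MGraph

/-- The elementary linear form `Tr_{N,T}` of a linear graph `T` of order `K`,
evaluated on the elementary tensor `A₁ ⊗ ⋯ ⊗ A_K`. -/
noncomputable def gTrace {K : ℕ} (G : MGraph (Fin K)) (N : ℕ)
    (A : Fin K → Matrix (Fin N) (Fin N) ℂ) : ℂ :=
  ∑ φ : G.V → Fin N, ∏ k : Fin K, A k (φ (G.ends k).2) (φ (G.ends k).1)

/-- The injective linear form `Tr⁰_{N,T}`: only injective maps `φ : V → [N]`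
are summed. -/
noncomputable def gTrace0 {K : ℕ} (G : MGraph (Fin K)) (N : ℕ)
    (A : Fin K → Matrix (Fin N) (Fin N) ℂ) : ℂ :=
  ∑ φ : G.V → Fin N,
    if Function.Injective φ then ∏ k : Fin K, A k (φ (G.ends k).2) (φ (G.ends k).1) else 0

end MGraph

/-- All partitions of a finite set, as setoids. -/
noncomputable instance setoidFintype (V : Type*) [Fintype V] [DecidableEq V] :
    Fintype (Setoid V) :=
  Fintype.ofSurjective (fun g : V → V => Setoid.ker g)
    (fun s => ⟨fun v => (Quotient.mk s v).out, Setoid.ext fun x y => by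
      constructor
      · intro h
        have h2 : Quotient.mk s x = Quotient.mk s y := by
          have hx := Quotient.out_eq (Quotient.mk s x)
          have hy := Quotient.out_eq (Quotient.mk s y)
          rw [← hx, ← hy]
          exact congrArg (Quotient.mk s) h
        exact Quotient.exact h2
      · intro h
        show (Quotient.mk s x).out = (Quotient.mk s y).out
        rw [Quotient.sound h]⟩)

namespace MGraph

variable {ι : Type} [Fintype ι] [DecidableEq ι]

/-- A circuit (closed walk using no edge twice) following the edge
orientations, given as the list of its successive edges. -/
def IsCircuitList (G : MGraph ι) (l : List ι) : Prop :=
  l ≠ [] ∧ l.Nodup ∧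
    ∀ (k : ℕ) (hk : k < l.length),
      (G.ends (l.get ⟨k, hk⟩)).2
        = (G.ends (l.get ⟨(k + 1) % l.length,
            Nat.mod_lt _ (Nat.lt_of_le_of_lt (Nat.zero_le k) hk)⟩)).1

/-- A simple cycle following the orientations: a circuit visiting no vertex
twice. -/
def IsSimpleCycleList (G : MGraph ι) (l : List ι) : Prop :=
  G.IsCircuitList l ∧ (l.map fun e => (G.ends e).1).Nodup

/-- Two edges lie on a common simple cycle (following the orientations). -/
def SameSimpleCycle (G : MGraph ι) (e f : ι) : Prop :=
  ∃ l : List ι, G.IsSimpleCycleList l ∧ e ∈ l ∧ f ∈ l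

end MGraph

set_option linter.unusedSectionVars false

namespace MGraph
variable {ι : Type} [Fintype ι] [DecidableEq ι]

def src (G : MGraph ι) (e : ι) : G.V := (G.ends e).1
def tgt (G : MGraph ι) (e : ι) : G.V := (G.ends e).2

/-- Directed walk predicate: `l` is a walk from `u` to `w`. -/
def IsWalk (G : MGraph ι) : List ι → G.V → G.V → Prop
  | [], u, w => u = w
  | e :: t, u, w => G.src e = u ∧ G.IsWalk t (G.tgt e) w

variable {G : MGraph ι}

lemma isWalk_nil {u w : G.V} (h : G.IsWalk [] u w) : u = w := h

lemma isWalk_append {x y : List ι} {u v w : G.V} (hx : G.IsWalk x u v)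
    (hy : G.IsWalk y v w) : G.IsWalk (x ++ y) u w := by
  induction x generalizing u with
  | nil => cases hx; simpa using hy
  | cons e t ih => exact ⟨hx.1, ih hx.2⟩

lemma isWalk_append_split {x y : List ι} {u w : G.V}
    (h : G.IsWalk (x ++ y) u w) : ∃ v, G.IsWalk x u v ∧ G.IsWalk y v w := by
  induction x generalizing u with
  | nil => exact ⟨u, rfl, h⟩
  | cons e t ih =>
    obtain ⟨v, h1, h2⟩ := ih h.2
    exact ⟨v, ⟨h.1, h1⟩, h2⟩

lemma isWalk_get {l : List ι} {u w : G.V} (h : G.IsWalk l u w)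
    (k : ℕ) (hk : k + 1 < l.length) :
    G.tgt (l.get ⟨k, Nat.lt_of_succ_lt hk⟩) = G.src (l.get ⟨k + 1, hk⟩) := by
  induction l generalizing u k with
  | nil => simp at hk
  | cons e t ih =>
    cases k with
    | zero =>
      cases t with
      | nil => simp at hk
      | cons f r => exact (h.2.1).symm
    | succ m => exact ih h.2 m (by simpa using hk)

lemma isWalk_src_get {l : List ι} {u w : G.V} (h : G.IsWalk l u w)
    (h0 : 0 < l.length) : G.src (l.get ⟨0, h0⟩) = u := by
  cases l with
  | nil => simp at h0
  | cons e t => exact h.1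

lemma isWalk_tgt_last {l : List ι} {u w : G.V} (h : G.IsWalk l u w)
    (h0 : 0 < l.length) :
    G.tgt (l.get ⟨l.length - 1, by omega⟩) = w := by
  induction l generalizing u with
  | nil => simp at h0
  | cons e t ih =>
    cases t with
    | nil => exact h.2
    | cons f r =>
      have := ih h.2 (by simp)
      simpa using this

lemma isWalk_drop {l : List ι} {u w : G.V} (h : G.IsWalk l u w)
    (p : ℕ) (hp : p < l.length) :
    G.IsWalk (l.drop p) (G.src (l.get ⟨p, hp⟩)) w := by
  induction l generalizing u p with
  | nil => simp at hp
  | cons e t ih =>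
    cases p with
    | zero => exact ⟨h.1.symm ▸ rfl, h.2⟩
    | succ m => exact ih h.2 m (by simpa using hp)

lemma isWalk_take {l : List ι} {u w : G.V} (h : G.IsWalk l u w)
    (q : ℕ) (hq : q < l.length) :
    G.IsWalk (l.take q) u (G.src (l.get ⟨q, hq⟩)) := by
  induction l generalizing u q with
  | nil => simp at hq
  | cons e t ih =>
    cases q with
    | zero =>
      exact (h.1).symm
    | succ m =>
      exact ⟨h.1, ih h.2 m (by simpa using hq)⟩

/-- From the `get`-based chain conditions build a walk. -/
lemma isWalk_of_get {l : List ι} (hne : l ≠ [])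
    (H : ∀ (k : ℕ) (hk : k + 1 < l.length),
      G.tgt (l.get ⟨k, Nat.lt_of_succ_lt hk⟩) = G.src (l.get ⟨k + 1, hk⟩)) :
    G.IsWalk l (G.src (l.get ⟨0, List.length_pos_iff.mpr hne⟩))
      (G.tgt (l.get ⟨l.length - 1, by
        have := List.length_pos_iff.mpr hne; omega⟩)) := by
  induction l with
  | nil => simp at hne
  | cons e t ih =>
    cases t with
    | nil => exact ⟨rfl, rfl⟩
    | cons f r =>
      refine ⟨rfl, ?_⟩
      have h0 : G.tgt e = G.src ((f :: r).get ⟨0, by simp⟩) :=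
        H 0 (by simp)
      have := ih (by simp) (fun k hk => H (k+1) (by simpa using hk))
      rw [h0]
      simpa using this

lemma get_fin_eq {α : Type*} {l : List α} {a b : ℕ} (pa : a < l.length) (pb : b < l.length)
    (h : a = b) : l.get ⟨a, pa⟩ = l.get ⟨b, pb⟩ := by subst h; rfl

/-- A circuit is the same as a nonempty closed walk with distinct edges. -/
lemma isCircuitList_iff {l : List ι} :
    G.IsCircuitList l ↔ l ≠ [] ∧ l.Nodup ∧ ∃ u, G.IsWalk l u u := by
  constructor
  · rintro ⟨hne, hnd, H⟩
    refine ⟨hne, hnd, G.src (l.get ⟨0, List.length_pos_iff.mpr hne⟩), ?_⟩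
    have hpos : 0 < l.length := List.length_pos_iff.mpr hne
    have Hw := isWalk_of_get hne (fun k hk => by
      have hmod : (k+1) % l.length = k + 1 := Nat.mod_eq_of_lt hk
      have h2 := H k (Nat.lt_of_succ_lt hk)
      rw [get_fin_eq (l := l) (Nat.mod_lt _ (by omega)) hk hmod] at h2
      exact h2)
    have hlast := H (l.length - 1) (by omega)
    have hmod : (l.length - 1 + 1) % l.length = 0 := by
      have h3 : l.length - 1 + 1 = l.length := by omega
      rw [h3, Nat.mod_self]
    rw [get_fin_eq (l := l) (Nat.mod_lt _ (by omega)) hpos hmod] at hlast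
    show G.IsWalk l _ _
    rw [show G.src (l.get ⟨0, hpos⟩)
        = G.tgt (l.get ⟨l.length - 1, by omega⟩) from hlast.symm] at Hw ⊢
    exact Hw
  · rintro ⟨hne, hnd, u, hw⟩
    refine ⟨hne, hnd, fun k hk => ?_⟩
    have hpos : 0 < l.length := List.length_pos_iff.mpr hne
    by_cases hk1 : k + 1 < l.length
    · have h2 := isWalk_get hw k hk1
      have hmod : (k+1) % l.length = k + 1 := Nat.mod_eq_of_lt hk1
      rw [get_fin_eq (l := l) (Nat.mod_lt _ (by omega)) hk1 hmod]
      exact h2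
    · have hk2 : k = l.length - 1 := by omega
      have hmod : (k+1) % l.length = 0 := by
        have h3 : k + 1 = l.length := by omega
        rw [h3, Nat.mod_self]
      have h1 := isWalk_tgt_last hw hpos
      have h2 := isWalk_src_get hw hpos
      rw [get_fin_eq (l := l) (Nat.mod_lt _ (by omega)) hpos hmod]
      rw [get_fin_eq (l := l) hk (by omega) hk2]
      rw [show ((G.ends (l.get ⟨l.length - 1, by omega⟩)).2 : G.V)
          = G.tgt (l.get ⟨l.length - 1, by omega⟩) from rfl, h1]
      exact h2.symm

end MGraph
namespace MGraph
variable {ι : Type} [Fintype ι] [DecidableEq ι] {G : MGraph ι}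

/-- Rotate a closed walk to start at a chosen edge occurrence. -/
lemma rotate_to_mem {l : List ι} {v : G.V} (hw : G.IsWalk l v v) {e : ι}
    (he : e ∈ l) : ∃ t : List ι, G.IsWalk (e :: t) (G.src e) (G.src e)
      ∧ (e :: t).Perm l := by
  obtain ⟨x, y, rfl⟩ := List.append_of_mem he
  obtain ⟨v₁, hx, hy⟩ := isWalk_append_split hw
  have hsrc : G.src e = v₁ := hy.1
  refine ⟨y ++ x, ⟨rfl, isWalk_append hy.2 (by rw [hsrc]; exact hx)⟩, ?_⟩
  have h1 : e :: (y ++ x) = (e :: y) ++ x := by simp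
  rw [h1]
  exact List.perm_append_comm

/-- Split a closed walk at an edge: suffix walk from `src e` back to the base
vertex. -/
lemma walk_from_mem {l : List ι} {v : G.V} (hw : G.IsWalk l v v) {e : ι}
    (he : e ∈ l) : ∃ t : List ι, G.IsWalk (e :: t) (G.src e) v
      ∧ ∀ f ∈ e :: t, f ∈ l := by
  obtain ⟨x, y, rfl⟩ := List.append_of_mem he
  obtain ⟨v₁, hx, hy⟩ := isWalk_append_split hw
  refine ⟨y, by rw [hy.1]; exact hy, fun f hf => List.mem_append.mpr (Or.inr hf)⟩

lemma tgt_mem_srcs {l : List ι} {v : G.V} (hw : G.IsWalk l v v) {e : ι}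
    (he : e ∈ l) : G.tgt e ∈ l.map G.src := by
  obtain ⟨t, hw', hperm⟩ := rotate_to_mem hw he
  cases t with
  | nil =>
    have : G.tgt e = G.src e := hw'.2
    rw [this]
    exact List.mem_map_of_mem he
  | cons f r =>
    have hf : G.src f = G.tgt e := hw'.2.1
    have : f ∈ l := hperm.subset (by simp)
    rw [← hf]
    exact List.mem_map_of_mem this

lemma closed_walk_get_mod {l : List ι} {u : G.V} (hw : G.IsWalk l u u)
    (k : ℕ) (hk : k < l.length) :
    G.tgt (l.get ⟨k, hk⟩)
      = G.src (l.get ⟨(k+1) % l.length, Nat.mod_lt _ (by omega)⟩) := by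
  by_cases hk1 : k + 1 < l.length
  · have h2 := isWalk_get hw k hk1
    rw [get_fin_eq (l := l) (Nat.mod_lt _ (by omega)) hk1 (Nat.mod_eq_of_lt hk1)]
    exact h2
  · have hpos : 0 < l.length := by omega
    have hk2 : k = l.length - 1 := by omega
    have hmod : (k+1) % l.length = 0 := by
      have h3 : k + 1 = l.length := by omega
      rw [h3, Nat.mod_self]
    have h1 := isWalk_tgt_last hw hpos
    have h2 := isWalk_src_get hw hpos
    rw [get_fin_eq (l := l) (Nat.mod_lt _ (by omega)) hpos hmod]
    rw [get_fin_eq (l := l) hk (by omega) hk2, h1, ← h2]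

/-- In a closed walk with pairwise distinct sources, the targets are also
pairwise distinct. -/
lemma nodup_map_tgt {l : List ι} {u : G.V} (hw : G.IsWalk l u u)
    (hs : (l.map G.src).Nodup) : (l.map G.tgt).Nodup := by
  rw [List.nodup_iff_injective_get] at hs ⊢
  intro i j hij
  have hlen : (l.map G.tgt).length = l.length := by simp
  have hlen' : (l.map G.src).length = l.length := by simp
  have hi : i.1 < l.length := by omega
  have hj : j.1 < l.length := by omega
  have hgi : (l.map G.tgt).get i = G.tgt (l.get ⟨i.1, hi⟩) := by
    simp [List.get_eq_getElem, List.getElem_map]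
  have hgj : (l.map G.tgt).get j = G.tgt (l.get ⟨j.1, hj⟩) := by
    simp [List.get_eq_getElem, List.getElem_map]
  rw [hgi, hgj, closed_walk_get_mod hw i.1 hi, closed_walk_get_mod hw j.1 hj] at hij
  have hb1 : (i.1+1) % l.length < (l.map G.src).length := by
    rw [hlen']; exact Nat.mod_lt _ (by omega)
  have hb2 : (j.1+1) % l.length < (l.map G.src).length := by
    rw [hlen']; exact Nat.mod_lt _ (by omega)
  have hkey := @hs ⟨(i.1+1) % l.length, hb1⟩ ⟨(j.1+1) % l.length, hb2⟩ (by
    have e1 : (l.map G.src).get ⟨(i.1+1) % l.length, hb1⟩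
        = G.src (l.get ⟨(i.1+1) % l.length, Nat.mod_lt _ (by omega)⟩) := by
      simp [List.get_eq_getElem, List.getElem_map]
    have e2 : (l.map G.src).get ⟨(j.1+1) % l.length, hb2⟩
        = G.src (l.get ⟨(j.1+1) % l.length, Nat.mod_lt _ (by omega)⟩) := by
      simp [List.get_eq_getElem, List.getElem_map]
    rw [e1, e2]; exact hij)
  have hfin : (i.1+1) % l.length = (j.1+1) % l.length := congrArg Fin.val hkey
  apply Fin.ext
  by_cases h1 : i.1 + 1 = l.length <;> by_cases h2 : j.1 + 1 = l.length
  · omega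
  · rw [h1, Nat.mod_self, Nat.mod_eq_of_lt (by omega)] at hfin; omega
  · rw [h2, Nat.mod_self, Nat.mod_eq_of_lt (by omega)] at hfin; omega
  · rw [Nat.mod_eq_of_lt (by omega), Nat.mod_eq_of_lt (by omega)] at hfin; omega

end MGraph
namespace MGraph
variable {ι : Type} [Fintype ι] [DecidableEq ι] {G : MGraph ι}

/-- The cactus hypothesis: every edge lies on exactly one simple cycle. -/
def HC (G : MGraph ι) : Prop :=
  ∀ e : ι, ∃ s : Finset ι,
    ((∃ l, G.IsSimpleCycleList l ∧ l.toFinset = s) ∧ e ∈ s) ∧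
    ∀ s' : Finset ι, (∃ l, G.IsSimpleCycleList l ∧ l.toFinset = s') →
      e ∈ s' → s' = s

lemma map_src_eq (l : List ι) : l.map G.src = l.map (fun e => (G.ends e).1) := rfl

/-- Separation: two distinct vertices of a simple cycle cannot be joined by a
directed walk avoiding the edges of that cycle. -/
lemma separation (hc : G.HC) {a : List ι} (ha : G.IsSimpleCycleList a) :
    ∀ (l : List ι) (u w : G.V), u ∈ a.map G.src → w ∈ a.map G.src →
      G.IsWalk l u w → (∀ f ∈ l, f ∉ a) → u = w := by
  suffices H : ∀ n : ℕ, ∀ (l : List ι) (u w : G.V), l.length ≤ n →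
      u ∈ a.map G.src → w ∈ a.map G.src → G.IsWalk l u w →
      (∀ f ∈ l, f ∉ a) → u = w by
    exact fun l u w hu hw hwalk hd => H l.length l u w le_rfl hu hw hwalk hd
  intro n
  induction n with
  | zero =>
    intro l u w hlen _ _ hwalk _
    interval_cases hl : l.length
    · cases l with
      | nil => exact hwalk
      | cons e t => simp at hl
  | succ n ih =>
    intro l u w hlen hu hw hwalk hdisj
    by_cases hnil : l = []
    · subst hnil; exact hwalk
    have hpos : 0 < l.length := List.length_pos_iff.mpr hnil
    -- case 1: an internal vertex of the walk lies on the cycle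
    by_cases hint : ∃ k : ℕ, ∃ hk : k < l.length, 0 < k ∧
        G.src (l.get ⟨k, hk⟩) ∈ a.map G.src
    · obtain ⟨k, hk, hk0, hmem⟩ := hint
      have h1 := isWalk_take hwalk k hk
      have h2 := isWalk_drop hwalk k hk
      have e1 : u = G.src (l.get ⟨k, hk⟩) :=
        ih (l.take k) u _ (by rw [List.length_take]; omega) hu hmem h1
          (fun f hf => hdisj f (List.take_subset _ _ hf))
      have e2 : G.src (l.get ⟨k, hk⟩) = w :=
        ih (l.drop k) _ w (by rw [List.length_drop]; omega) hmem hw h2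
          (fun f hf => hdisj f (List.drop_subset _ _ hf))
      exact e1.trans e2
    -- vertex function along the walk
    · set vert : ℕ → G.V := fun k =>
        if h : k < l.length then G.src (l.get ⟨k, h⟩) else w with hvert
      have hvert0 : vert 0 = u := by
        simp only [hvert, dif_pos hpos]
        exact isWalk_src_get hwalk hpos
      have hvertlen : ∀ k, l.length ≤ k → vert k = w := by
        intro k hk
        simp only [hvert]
        exact dif_neg (by omega)
      have hwalk_to : ∀ k, k ≤ l.length → G.IsWalk (l.take k) u (vert k) := by
        intro k hk
        by_cases h : k < l.length
        · simpa only [hvert, dif_pos h] using isWalk_take hwalk k h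
        · have : k = l.length := by omega
          subst this
          rw [hvertlen _ le_rfl]
          simpa using hwalk
      have hwalk_from : ∀ k, k ≤ l.length → G.IsWalk (l.drop k) (vert k) w := by
        intro k hk
        by_cases h : k < l.length
        · simpa only [hvert, dif_pos h] using isWalk_drop hwalk k h
        · have : k = l.length := by omega
          subst this
          rw [hvertlen _ le_rfl]
          simp [IsWalk]
      -- case 2: a repeated vertex along the walk
      by_cases hdup : ∃ k1 k2 : ℕ, k1 < k2 ∧ k2 ≤ l.length ∧ vert k1 = vert k2
      · obtain ⟨k1, k2, h12, h2len, heq⟩ := hdup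
        have hw1 := hwalk_to k1 (by omega)
        have hw2 := hwalk_from k2 h2len
        rw [heq] at hw1
        have hcomb := isWalk_append hw1 hw2
        refine ih (l.take k1 ++ l.drop k2) u w ?_ hu hw hcomb ?_
        · have : (l.take k1 ++ l.drop k2).length = k1 + (l.length - k2) := by
            simp; omega
          omega
        · intro f hf
          rcases List.mem_append.mp hf with h | h
          · exact hdisj f (List.take_subset _ _ h)
          · exact hdisj f (List.drop_subset _ _ h)
      -- case 3: a genuine simple path; splice with an arc of the cycle
      · by_cases huw : u = w
        · exact huw
        exfalso
        -- sources of l are pairwise distinct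
        have hsnd : (l.map G.src).Nodup := by
          rw [List.nodup_iff_injective_get]
          intro i j hij
          have hi : i.1 < l.length := by
            have := i.2; simpa using this
          have hj : j.1 < l.length := by
            have := j.2; simpa using this
          have hij' : G.src (l.get ⟨i.1, hi⟩) = G.src (l.get ⟨j.1, hj⟩) := by
            have e1 : (l.map G.src).get i = G.src (l.get ⟨i.1, hi⟩) := by
              simp [List.get_eq_getElem, List.getElem_map]
            have e2 : (l.map G.src).get j = G.src (l.get ⟨j.1, hj⟩) := by
              simp [List.get_eq_getElem, List.getElem_map]
            rw [← e1, ← e2]; exact hij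
          have hvij : vert i.1 = vert j.1 := by
            simp only [hvert, dif_pos hi, dif_pos hj]; exact hij'
          by_contra hne
          rcases Nat.lt_or_ge i.1 j.1 with h | h
          · exact hdup ⟨i.1, j.1, h, by omega, hvij⟩
          · have : j.1 < i.1 := by
              rcases Nat.eq_or_lt_of_le h with h' | h'
              · exact absurd (Fin.ext h'.symm) hne
              · exact h'
            exact hdup ⟨j.1, i.1, this, by omega, hvij.symm⟩
        -- the closed walk of the cycle `a`
        obtain ⟨hane, hand, u₀, hwa⟩ := isCircuitList_iff.mp ha.1
        obtain ⟨ew, hewa, hews⟩ := List.mem_map.mp hw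
        obtain ⟨t, hwt, hperm⟩ := rotate_to_mem hwa hewa
        set b : List ι := ew :: t with hb
        have hbw : G.IsWalk b w w := by rw [← hews]; exact hwt
        have hbnd : b.Nodup := hperm.nodup_iff.mpr hand
        have hbsrc : (b.map G.src).Nodup := by
          have : (b.map G.src).Perm (a.map G.src) := hperm.map _
          rw [this.nodup_iff, map_src_eq]
          exact ha.2
        have hub : u ∈ b.map G.src := by
          have : (b.map G.src).Perm (a.map G.src) := hperm.map _
          exact this.mem_iff.mpr hu
        obtain ⟨kf, hks⟩ := List.mem_iff_get.mp hub
        obtain ⟨k, hkb⟩ := kf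
        have hkb' : k < b.length := by simpa using hkb
        have hksrc : G.src (b.get ⟨k, hkb'⟩) = u := by
          rw [← hks]; simp [List.get_eq_getElem, List.getElem_map]
        have hk0 : 0 < k := by
          rcases Nat.eq_zero_or_pos k with h | h
          · exfalso
            apply huw
            subst h
            rw [← hks]
            simp only [List.get_eq_getElem, List.getElem_map]
            show G.src (b.get ⟨0, hkb'⟩) = w
            rw [show b.get ⟨0, hkb'⟩ = ew from rfl, hews]
          · exact h
        set arc : List ι := b.take k with harcdef
        have harc : G.IsWalk arc w u := by
          have h1 := isWalk_take hbw k hkb'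
          rw [hksrc] at h1
          exact h1
        have arc_sub_b : ∀ f ∈ arc, f ∈ b := fun f hf => List.take_subset _ _ hf
        have arc_sub_a : ∀ f ∈ arc, f ∈ a :=
          fun f hf => hperm.subset (arc_sub_b f hf)
        set Z : List ι := l ++ arc with hZdef
        have hZw : G.IsWalk Z u u := isWalk_append hwalk harc
        have hZne : Z ≠ [] := by
          simp only [hZdef]
          intro h
          exact hnil (List.append_eq_nil_iff.mp h).1
        have hZnd : Z.Nodup := by
          rw [hZdef, List.nodup_append]
          exact ⟨hsnd.of_map, (List.take_sublist _ _).nodup hbnd,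
            fun x hx y hy hxy => by subst hxy; exact hdisj x hx (arc_sub_a x hy)⟩
        have harcsrc : (arc.map G.src).Nodup := by
          rw [harcdef, List.map_take]
          exact (List.take_sublist _ _).nodup hbsrc
        have harcsrc_sub : ∀ x ∈ arc.map G.src, x ∈ a.map G.src := by
          intro x hx
          obtain ⟨f, hf, rfl⟩ := List.mem_map.mp hx
          exact List.mem_map_of_mem (arc_sub_a f hf)
        have hZsrc : (Z.map G.src).Nodup := by
          rw [hZdef, List.map_append, List.nodup_append]
          refine ⟨hsnd, harcsrc, ?_⟩
          intro x hx x' hx' hxx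
          subst hxx
          obtain ⟨k1f, hk1s⟩ := List.mem_iff_get.mp hx
          obtain ⟨k1v, hk1b⟩ := k1f
          set k1 : Fin (l.map G.src).length := ⟨k1v, hk1b⟩ with hk1def
          have hk1b' : k1.1 < l.length := by simpa using k1.2
          have hxs : G.src (l.get ⟨k1.1, hk1b'⟩) = x := by
            rw [← hk1s]; simp [List.get_eq_getElem, List.getElem_map]
          rcases Nat.eq_zero_or_pos k1.1 with h0 | h0
          · -- x = u, but u occurs in the cycle sources only at index k ≥ 1
            have hxu : x = u := by
              rw [← hxs]
              have : (⟨k1.1, hk1b'⟩ : Fin l.length) = ⟨0, hpos⟩ := Fin.ext h0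
              rw [this]
              exact isWalk_src_get hwalk hpos
            subst hxu
            -- x ∈ (b.map src).take k contradicts nodup of b.map src
            have hx'' : x ∈ (b.map G.src).take k := by
              rw [← List.map_take]
              rw [harcdef] at hx'
              exact hx'
            obtain ⟨j, hjs⟩ := List.mem_iff_get.mp hx''
            have hjlt : j.1 < k := by
              have := j.2
              simp only [List.length_take] at this
              omega
            have hjb : j.1 < (b.map G.src).length := by
              have := j.2
              simp only [List.length_take] at this
              omega
            have : (b.map G.src).get ⟨j.1, hjb⟩ = x := by
              rw [← hjs]
              simp [List.get_eq_getElem, List.getElem_take]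
            have hinj : (⟨j.1, hjb⟩ : Fin (b.map G.src).length) = ⟨k, hkb⟩ :=
              List.nodup_iff_injective_get.mp hbsrc (by rw [this, hks])
            have : j.1 = k := congrArg Fin.val hinj
            omega
          · exact hint ⟨k1.1, hk1b', h0, hxs ▸ harcsrc_sub x hx'⟩
        have hZs : G.IsSimpleCycleList Z := by
          refine ⟨isCircuitList_iff.mpr ⟨hZne, hZnd, u, hZw⟩, ?_⟩
          rw [← map_src_eq]
          exact hZsrc
        have harcpos : 0 < arc.length := by
          rw [harcdef, List.length_take]
          have : 0 < b.length := by simp [hb]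
          omega
        have hewarc : ew ∈ arc := by
          have h1 : arc.get ⟨0, harcpos⟩ ∈ arc := List.get_mem arc ⟨0, harcpos⟩
          have h2 : arc.get ⟨0, harcpos⟩ = ew := by
            simp only [harcdef, List.get_eq_getElem, List.getElem_take]
            rfl
          rwa [h2] at h1
        obtain ⟨sF, -, huniq⟩ := hc ew
        have haF : a.toFinset = sF :=
          huniq a.toFinset ⟨a, ha, rfl⟩ (List.mem_toFinset.mpr hewa)
        have hZF : Z.toFinset = sF :=
          huniq Z.toFinset ⟨Z, hZs, rfl⟩
            (List.mem_toFinset.mpr (by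
              rw [hZdef]; exact List.mem_append_right _ hewarc))
        have hfZ : l.head hnil ∈ Z := by
          rw [hZdef]
          exact List.mem_append_left _ (List.head_mem hnil)
        have hfa : l.head hnil ∈ a := by
          have := List.mem_toFinset.mpr hfZ
          rw [hZF, ← haF] at this
          exact List.mem_toFinset.mp this
        exact hdisj _ (List.head_mem hnil) hfa

end MGraph
namespace MGraph
variable {ι : Type} [Fintype ι] [DecidableEq ι] {G : MGraph ι}

/-- The unique simple cycle through an edge. -/
noncomputable def cycF (G : MGraph ι) (hc : G.HC) (e : ι) : Finset ι :=
  (hc e).choose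

lemma cycF_mem (hc : G.HC) (e : ι) : e ∈ G.cycF hc e :=
  (hc e).choose_spec.1.2

lemma cycF_cycle (hc : G.HC) (e : ι) :
    ∃ l, G.IsSimpleCycleList l ∧ l.toFinset = G.cycF hc e :=
  (hc e).choose_spec.1.1

lemma cycF_unique (hc : G.HC) (e : ι) {l : List ι}
    (hl : G.IsSimpleCycleList l) (he : e ∈ l) : l.toFinset = G.cycF hc e :=
  (hc e).choose_spec.2 _ ⟨l, hl, rfl⟩ (List.mem_toFinset.mpr he)

lemma cycF_eq_of_mem (hc : G.HC) {e f : ι} (hf : f ∈ G.cycF hc e) :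
    G.cycF hc f = G.cycF hc e := by
  obtain ⟨l, hl, hlF⟩ := cycF_cycle hc e
  rw [← cycF_unique hc f hl (by rw [← List.mem_toFinset, hlF]; exact hf), hlF]

lemma sameSimpleCycle_iff (hc : G.HC) {e f : ι} :
    G.SameSimpleCycle e f ↔ f ∈ G.cycF hc e := by
  constructor
  · rintro ⟨l, hl, he, hf⟩
    rw [← cycF_unique hc e hl he]
    exact List.mem_toFinset.mpr hf
  · intro hf
    obtain ⟨l, hl, hlF⟩ := cycF_cycle hc e
    exact ⟨l, hl, by rw [← List.mem_toFinset, hlF]; exact cycF_mem hc e,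
      by rw [← List.mem_toFinset, hlF]; exact hf⟩

/-- Directed reachability within an edge set. -/
def DReach (G : MGraph ι) (s : Set ι) (u w : G.V) : Prop :=
  ∃ l : List ι, G.IsWalk l u w ∧ ∀ f ∈ l, f ∈ s

lemma DReach.refl (s : Set ι) (u : G.V) : G.DReach s u u :=
  ⟨[], rfl, by simp⟩

lemma DReach.trans {s : Set ι} {u v w : G.V} (h1 : G.DReach s u v)
    (h2 : G.DReach s v w) : G.DReach s u w := by
  obtain ⟨l1, hw1, hs1⟩ := h1
  obtain ⟨l2, hw2, hs2⟩ := h2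
  exact ⟨l1 ++ l2, isWalk_append hw1 hw2, fun f hf => by
    rcases List.mem_append.mp hf with h | h
    · exact hs1 f h
    · exact hs2 f h⟩

lemma DReach.mono {s s' : Set ι} (hss : s ⊆ s') {u w : G.V}
    (h : G.DReach s u w) : G.DReach s' u w := by
  obtain ⟨l, hw, hs⟩ := h
  exact ⟨l, hw, fun f hf => hss (hs f hf)⟩

def CycClosed (G : MGraph ι) (hc : G.HC) (s : Set ι) : Prop :=
  ∀ e ∈ s, (G.cycF hc e : Set ι) ⊆ s

/-- Walk along the rest of the cycle of `e`: from `tgt e` back to `src e`. -/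
lemma dreach_back (hc : G.HC) (e : ι) :
    G.DReach (G.cycF hc e : Set ι) (G.tgt e) (G.src e) := by
  obtain ⟨l, hl, hlF⟩ := cycF_cycle hc e
  obtain ⟨hne, hnd, u₀, hwa⟩ := isCircuitList_iff.mp hl.1
  have hel : e ∈ l := by
    rw [← List.mem_toFinset, hlF]; exact cycF_mem hc e
  obtain ⟨t, hwt, hperm⟩ := rotate_to_mem hwa hel
  refine ⟨t, hwt.2, fun f hf => ?_⟩
  have : f ∈ l := hperm.subset (by simp [hf])
  rw [← hlF] at *
  exact List.mem_toFinset.mpr this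

lemma dreach_symm (hc : G.HC) {s : Set ι} (hs : G.CycClosed hc s)
    {u w : G.V} (h : G.DReach s u w) : G.DReach s w u := by
  obtain ⟨l, hw, hmem⟩ := h
  induction l generalizing u with
  | nil => exact (isWalk_nil hw) ▸ DReach.refl s u
  | cons e t ih =>
    have h1 : G.DReach s (G.tgt e) (G.src e) :=
      (dreach_back hc e).mono (hs e (hmem e (by simp)))
    have h2 : G.DReach s w (G.tgt e) := ih hw.2 (fun f hf => hmem f (by simp [hf]))
    rw [hw.1] at h1
    exact h2.trans h1

/-- There is an edge leaving the head of every edge's target, inside the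
cycle of that edge. -/
lemma succ_edge (hc : G.HC) (f : ι) :
    ∃ g ∈ G.cycF hc f, G.src g = G.tgt f := by
  obtain ⟨l, hl, hlF⟩ := cycF_cycle hc f
  obtain ⟨hne, hnd, u₀, hwa⟩ := isCircuitList_iff.mp hl.1
  have hfl : f ∈ l := by
    rw [← List.mem_toFinset, hlF]; exact cycF_mem hc f
  obtain ⟨t, hwt, hperm⟩ := rotate_to_mem hwa hfl
  cases t with
  | nil =>
    exact ⟨f, cycF_mem hc f, (isWalk_nil hwt.2).symm⟩
  | cons g r =>
    refine ⟨g, ?_, hwt.2.1⟩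
    rw [← hlF, List.mem_toFinset]
    exact hperm.subset (by simp)

end MGraph
namespace MGraph
variable {ι : Type} [Fintype ι] [DecidableEq ι] {G : MGraph ι}

lemma pred_src_mem {l : List ι} {u : G.V} (hw : G.IsWalk l u u) {z : G.V}
    (hz : z ∈ l.map G.src) : ∃ f ∈ l, G.tgt f = z := by
  obtain ⟨kf, hks⟩ := List.mem_iff_get.mp hz
  obtain ⟨k, hkb⟩ := kf
  have hk : k < l.length := by simpa using hkb
  have hzs : G.src (l.get ⟨k, hk⟩) = z := by
    rw [← hks]; simp [List.get_eq_getElem, List.getElem_map]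
  set n := l.length with hn
  have hnpos : 0 < n := by omega
  have hj : (k + n - 1) % n < n := Nat.mod_lt _ hnpos
  refine ⟨l.get ⟨(k + n - 1) % n, hj⟩, List.get_mem _ _, ?_⟩
  have hmod := closed_walk_get_mod hw ((k + n - 1) % n) hj
  have hidx : ((k + n - 1) % n + 1) % n = k := by
    rw [Nat.mod_add_mod]
    have h1 : k + n - 1 + 1 = k + n := by omega
    rw [h1, Nat.add_mod_right]
    exact Nat.mod_eq_of_lt hk
  rw [hmod, get_fin_eq (l := l) (Nat.mod_lt _ (by omega)) hk hidx, hzs]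

lemma euler (hc : G.HC) (s : Finset ι) :
    (∀ e ∈ s, (G.cycF hc e : Finset ι) ⊆ s) →
      ∀ e₀ ∈ s, ∃ l : List ι, l.Nodup ∧ G.IsWalk l (G.src e₀) (G.src e₀) ∧
        ∀ e : ι, (e ∈ l ↔ e ∈ s ∧ G.DReach ↑s (G.src e) (G.src e₀)) := by
  induction s using Finset.strongInductionOn with
  | _ s ih =>
  intro hclosed e₀ he₀
  -- the cycle of e₀, rotated to start at e₀
  obtain ⟨c, hcyc, hcF⟩ := cycF_cycle hc e₀
  obtain ⟨hcne, hcnd, u₀, hcw⟩ := isCircuitList_iff.mp hcyc.1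
  have he₀c : e₀ ∈ c := by rw [← List.mem_toFinset, hcF]; exact cycF_mem hc e₀
  obtain ⟨t₀, hat, hperm⟩ := rotate_to_mem hcw he₀c
  set a : List ι := e₀ :: t₀ with hadef
  have haw : G.IsWalk a (G.src e₀) (G.src e₀) := hat
  have hand : a.Nodup := hperm.nodup_iff.mpr hcnd
  have hasrc : (a.map G.src).Nodup := by
    have h1 : (a.map G.src).Perm (c.map G.src) := hperm.map _
    rw [h1.nodup_iff, map_src_eq]; exact hcyc.2
  have haS : G.IsSimpleCycleList a :=
    ⟨isCircuitList_iff.mpr ⟨by simp [hadef], hand, _, haw⟩,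
      by rw [← map_src_eq]; exact hasrc⟩
  have haF : a.toFinset = G.cycF hc e₀ := by
    rw [← hcF]
    exact Finset.ext (fun x => by
      simp only [List.mem_toFinset]; exact hperm.mem_iff)
  have ha_sub_s : ∀ f ∈ a, f ∈ s := fun f hf =>
    hclosed e₀ he₀ (by rw [← haF]; exact List.mem_toFinset.mpr hf)
  set s' : Finset ι := s \ a.toFinset with hs'def
  have hs'sub : s' ⊂ s := Finset.sdiff_ssubset
    (fun x hx => ha_sub_s x (List.mem_toFinset.mp hx))
    ⟨e₀, by simp [hadef]⟩
  have hs'closed : ∀ e ∈ s', (G.cycF hc e : Finset ι) ⊆ s' := by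
    intro e he f hf
    have hes : e ∈ s := (Finset.mem_sdiff.mp he).1
    have hea : e ∉ a.toFinset := (Finset.mem_sdiff.mp he).2
    rw [hs'def, Finset.mem_sdiff]
    refine ⟨hclosed e hes hf, ?_⟩
    intro hfa
    rw [haF] at hfa
    have h1 : G.cycF hc f = G.cycF hc e := cycF_eq_of_mem hc hf
    have h2 : G.cycF hc f = G.cycF hc e₀ := cycF_eq_of_mem hc hfa
    apply hea
    rw [haF, ← h2, h1]
    exact cycF_mem hc e
  have hS'c : G.CycClosed hc ↑s' := by
    intro e he f hf
    exact Finset.mem_coe.mpr (hs'closed e (Finset.mem_coe.mp he) hf)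
  -- loops at every vertex
  have key : ∀ x : G.V, ∃ L : List ι, L.Nodup ∧ G.IsWalk L x x ∧
      ∀ e : ι, (e ∈ L ↔ e ∈ s' ∧ G.DReach ↑s' (G.src e) x) := by
    intro x
    by_cases hx : ∃ g ∈ s', G.src g = x
    · obtain ⟨g, hgs', hgx⟩ := hx
      obtain ⟨L, h1, h2, h3⟩ := ih s' hs'sub hs'closed g hgs'
      rw [hgx] at h2 h3
      exact ⟨L, h1, h2, h3⟩
    · refine ⟨[], by simp, rfl, fun e => ?_⟩
      simp only [List.not_mem_nil, false_iff]
      rintro ⟨hes', W, hWw, hWs⟩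
      cases W with
      | nil => exact hx ⟨e, hes', isWalk_nil hWw⟩
      | cons f r =>
        have hpos : 0 < (f :: r).length := by simp
        have hlast := isWalk_tgt_last hWw hpos
        set fl := (f :: r).get ⟨(f :: r).length - 1, by omega⟩ with hfl
        have hfls' : fl ∈ s' := Finset.mem_coe.mp (hWs _ (List.get_mem _ _))
        obtain ⟨g, hg1, hg2⟩ := succ_edge hc fl
        exact hx ⟨g, hs'closed fl hfls' hg1, by rw [hg2, hlast]⟩
  choose L hL1 hL2 hL3 using key
  have hLs' : ∀ x, ∀ e ∈ L x, e ∈ s' := fun x e he => ((hL3 x e).mp he).1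
  have hLna : ∀ x, ∀ e ∈ L x, e ∉ a := by
    intro x e he hea
    have := (Finset.mem_sdiff.mp (hLs' x e he)).2
    exact this (List.mem_toFinset.mpr hea)
  have hmaptgt : (a.map G.tgt).Nodup := nodup_map_tgt haw hasrc
  -- loops at distinct cycle-vertices are disjoint
  have hdisjL : ∀ f ∈ a, ∀ f' ∈ a, f ≠ f' →
      ∀ e, e ∈ L (G.tgt f) → e ∈ L (G.tgt f') → False := by
    intro f hf f' hf' hne e h1 h2
    have d1 := (hL3 _ e).mp h1
    have d2 := (hL3 _ e).mp h2
    have hreach : G.DReach ↑s' (G.tgt f) (G.tgt f') :=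
      (dreach_symm hc hS'c d1.2).trans d2.2
    obtain ⟨Wl, hWw, hWs⟩ := hreach
    have heq : G.tgt f = G.tgt f' := separation hc haS Wl _ _
      (tgt_mem_srcs haw hf) (tgt_mem_srcs haw hf') hWw
      (fun x hx hxa => (Finset.mem_sdiff.mp (Finset.mem_coe.mp (hWs x hx))).2
        (List.mem_toFinset.mpr hxa))
    exact hne (List.inj_on_of_nodup_map hmaptgt hf hf' heq)
  -- splicing the loops into the cycle
  have splice : ∀ cList : List ι, cList.Nodup → (∀ f ∈ cList, f ∈ a) →
      ∀ u v : G.V, G.IsWalk cList u v →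
      ∃ m : List ι, G.IsWalk m u v ∧ m.Nodup ∧
        ∀ e, (e ∈ m ↔ e ∈ cList ∨ ∃ f ∈ cList, e ∈ L (G.tgt f)) := by
    intro cList
    induction cList with
    | nil =>
      intro _ _ u v hw
      exact ⟨[], hw, by simp, by simp⟩
    | cons f rest ihc =>
      intro hnd hsub u v hw
      obtain ⟨m, hm1, hm2, hm3⟩ := ihc (List.Nodup.of_cons hnd)
        (fun x hx => hsub x (by simp [hx])) (G.tgt f) v hw.2
      have hfa : f ∈ a := hsub f (by simp)
      refine ⟨f :: (L (G.tgt f) ++ m), ⟨hw.1, isWalk_append (hL2 _) hm1⟩, ?_, ?_⟩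
      · rw [List.nodup_cons, List.nodup_append]
        refine ⟨?_, hL1 _, hm2, ?_⟩
        · intro hfm
          rcases List.mem_append.mp hfm with h | h
          · exact hLna _ f h hfa
          · rcases (hm3 f).mp h with h' | ⟨f', hf', h'⟩
            · exact (List.nodup_cons.mp hnd).1 h'
            · exact hLna _ f h' hfa
        · intro e he e' hem hee
          subst hee
          rcases (hm3 e).mp hem with h' | ⟨f', hf', h'⟩
          · exact hLna _ e he (hsub e (by simp [h']))
          · have hff' : f ≠ f' := fun hh =>
              (List.nodup_cons.mp hnd).1 (hh ▸ hf')
            exact hdisjL f hfa f' (hsub f' (by simp [hf'])) hff' e he h'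
      · intro e
        simp only [List.mem_cons, List.mem_append, hm3]
        constructor
        · rintro (h | h | h | ⟨f', hf', h⟩)
          · exact Or.inl (Or.inl h)
          · exact Or.inr ⟨f, Or.inl rfl, h⟩
          · exact Or.inl (Or.inr h)
          · exact Or.inr ⟨f', Or.inr hf', h⟩
        · rintro ((h | h) | ⟨f', hf' | hf', h⟩)
          · exact Or.inl h
          · exact Or.inr (Or.inr (Or.inl h))
          · exact Or.inr (Or.inl (hf' ▸ h))
          · exact Or.inr (Or.inr (Or.inr ⟨f', hf', h⟩))
  obtain ⟨m, hmw, hmnd, hmm⟩ := splice a hand (fun f hf => hf) _ _ haw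
  refine ⟨m, hmnd, hmw, fun e => ?_⟩
  constructor
  · intro hem
    rcases (hmm e).mp hem with h | ⟨f, hf, h⟩
    · refine ⟨ha_sub_s e h, ?_⟩
      obtain ⟨t, hwt, hsubt⟩ := walk_from_mem haw h
      exact ⟨e :: t, hwt, fun x hx => Finset.mem_coe.mpr (ha_sub_s x (hsubt x hx))⟩
    · have d := (hL3 _ e).mp h
      refine ⟨(Finset.mem_sdiff.mp d.1).1, ?_⟩
      have r1 : G.DReach ↑s (G.src e) (G.tgt f) :=
        d.2.mono (fun x hx => Finset.mem_coe.mpr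
          ((Finset.mem_sdiff.mp (Finset.mem_coe.mp hx)).1))
      obtain ⟨t, hwt, hsubt⟩ := walk_from_mem haw hf
      have r2 : G.DReach ↑s (G.tgt f) (G.src e₀) :=
        ⟨t, hwt.2, fun x hx => Finset.mem_coe.mpr
          (ha_sub_s x (hsubt x (by simp [hx])))⟩
      exact r1.trans r2
  · rintro ⟨hes, W, hWw, hWs⟩
    -- walk to the cycle: find the first vertex on the cycle
    have reach_attach : ∀ (W' : List ι) (x : G.V), G.IsWalk W' x (G.src e₀) →
        (∀ f ∈ W', f ∈ s) → ∃ z, z ∈ a.map G.src ∧ G.DReach ↑s' x z := by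
      intro W'
      induction W' with
      | nil =>
        intro x hx _
        refine ⟨x, ?_, DReach.refl _ _⟩
        rw [isWalk_nil hx]
        have : G.src e₀ = G.src (a.get ⟨0, by simp [hadef]⟩) := rfl
        rw [this]
        exact List.mem_map_of_mem (List.get_mem _ _)
      | cons f r ihw =>
        intro x hx hsubW
        by_cases hxa : x ∈ a.map G.src
        · exact ⟨x, hxa, DReach.refl _ _⟩
        · have hfa : f ∉ a := fun h => hxa (hx.1 ▸ List.mem_map_of_mem h)
          have hfs' : f ∈ s' := Finset.mem_sdiff.mpr
            ⟨hsubW f (by simp), fun h => hfa (List.mem_toFinset.mp h)⟩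
          obtain ⟨z, hz1, hz2⟩ := ihw (G.tgt f) hx.2 (fun x hx => hsubW x (by simp [hx]))
          refine ⟨z, hz1, ?_⟩
          exact DReach.trans ⟨[f], ⟨hx.1, rfl⟩, by simp [hfs']⟩ hz2
    obtain ⟨z, hz1, hz2⟩ := reach_attach W (G.src e) hWw
      (fun f hf => Finset.mem_coe.mp (hWs f hf))
    rw [hmm]
    by_cases hea : e ∈ a
    · exact Or.inl hea
    · have hes' : e ∈ s' := Finset.mem_sdiff.mpr
        ⟨hes, fun h => hea (List.mem_toFinset.mp h)⟩
      obtain ⟨f, hf, hfz⟩ := pred_src_mem haw hz1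
      refine Or.inr ⟨f, hf, ?_⟩
      rw [hL3]
      exact ⟨hes', hfz ▸ hz2⟩

end MGraph
namespace MGraph
variable {ι : Type} [Fintype ι] [DecidableEq ι] {G : MGraph ι}

lemma univ_cycClosed (hc : G.HC) : G.CycClosed hc Set.univ :=
  fun _ _ _ _ => trivial

lemma eqvGen_iff_dreach (hc : G.HC) {u w : G.V} :
    Relation.EqvGen (G.adjOn Set.univ) u w ↔ G.DReach Set.univ u w := by
  constructor
  · intro h
    induction h with
    | rel x y hxy =>
      obtain ⟨e, -, h | h⟩ := hxy
      · exact ⟨[e], ⟨congrArg Prod.fst h, congrArg Prod.snd h⟩, by simp⟩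
      · exact dreach_symm hc (univ_cycClosed hc)
          ⟨[e], ⟨congrArg Prod.fst h, congrArg Prod.snd h⟩, by simp⟩
    | refl x => exact DReach.refl _ _
    | symm x y _ ih => exact dreach_symm hc (univ_cycClosed hc) ih
    | trans x y z _ _ ih1 ih2 => exact ih1.trans ih2
  · rintro ⟨W, hw, -⟩
    induction W generalizing u with
    | nil => exact (isWalk_nil hw) ▸ Relation.EqvGen.refl u
    | cons e t ih =>
      refine Relation.EqvGen.trans _ (G.tgt e) _ ?_ (ih hw.2)
      exact Relation.EqvGen.rel _ _ ⟨e, trivial, Or.inl (by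
        rw [← hw.1]; rfl)⟩

lemma part1 (hc : G.HC) (e₀ : ι) :
    ∃ l : List ι, G.IsCircuitList l ∧ e₀ ∈ l ∧
      l.toFinset = Finset.univ.filter (fun e : ι =>
        (G.reachSetoid Set.univ).r (G.ends e).1 (G.ends e₀).1) := by
  obtain ⟨m, hnd, hw, hiff⟩ := euler hc Finset.univ
    (fun e _ => Finset.subset_univ _) e₀ (Finset.mem_univ _)
  have he₀m : e₀ ∈ m := (hiff e₀).mpr ⟨Finset.mem_univ _, DReach.refl _ _⟩
  refine ⟨m, isCircuitList_iff.mpr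
    ⟨List.ne_nil_of_mem he₀m, hnd, _, hw⟩, he₀m, ?_⟩
  ext e
  rw [List.mem_toFinset, hiff e, Finset.mem_filter]
  have hr : (G.reachSetoid Set.univ).r (G.ends e).1 (G.ends e₀).1
      ↔ G.DReach Set.univ (G.src e) (G.src e₀) := eqvGen_iff_dreach hc
  rw [hr]
  rw [show ((Finset.univ : Finset ι) : Set ι) = Set.univ from Finset.coe_univ]

lemma part2_nc (hc : G.HC) {l : List ι} (hl : G.IsCircuitList l) :
    ¬ ∃ i ii j jj : Fin l.length, i < ii ∧ ii < j ∧ j < jj ∧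
      G.SameSimpleCycle (l.get i) (l.get j) ∧
      G.SameSimpleCycle (l.get ii) (l.get jj) ∧
      ¬ G.SameSimpleCycle (l.get i) (l.get ii) := by
  rintro ⟨i, ii, j, jj, h1, h2, h3, hA, hB, hAB⟩
  obtain ⟨hlne, hlnd, u, hlw⟩ := isCircuitList_iff.mp hl
  set A := G.cycF hc (l.get i) with hAdef
  have hjA : l.get j ∈ A := (sameSimpleCycle_iff hc).mp hA
  have hiiA : l.get ii ∉ A := fun h => hAB ((sameSimpleCycle_iff hc).mpr h)
  set B := G.cycF hc (l.get ii) with hBdef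
  have hjjB : l.get jj ∈ B := (sameSimpleCycle_iff hc).mp hB
  have hiiB : l.get ii ∈ B := cycF_mem hc _
  have hBnA : ∀ x ∈ B, x ∉ A := by
    intro x hxB hxA
    have hBA : B = A := by
      rw [hBdef, hAdef, ← cycF_eq_of_mem hc hxB, ← cycF_eq_of_mem hc hxA]
    exact hiiA (hBA ▸ hiiB)
  -- cycle list for A
  obtain ⟨aL, haLS, haLF⟩ := cycF_cycle hc (l.get i)
  obtain ⟨hane, hand, ua, haw⟩ := isCircuitList_iff.mp haLS.1
  have hasrc : (aL.map G.src).Nodup := by rw [map_src_eq]; exact haLS.2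
  -- positions of A-edges just before ii and jj
  set P : ℕ → Prop := fun t => ∃ h : t < l.length, l.get ⟨t, h⟩ ∈ A with hPdef
  have hPi : P i.1 := ⟨i.2, cycF_mem hc _⟩
  have hPj : P j.1 := ⟨j.2, hjA⟩
  set p := Nat.findGreatest P ii.1 with hpdef
  set q := Nat.findGreatest P jj.1 with hqdef
  have hpP : P p := Nat.findGreatest_spec (le_of_lt h1) hPi
  have hqP : P q := Nat.findGreatest_spec (le_of_lt h3) hPj
  have hqj : j.1 ≤ q := Nat.le_findGreatest (le_of_lt h3) hPj
  have hple : p ≤ ii.1 := Nat.findGreatest_le _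
  have hqle : q ≤ jj.1 := Nat.findGreatest_le _
  obtain ⟨hplt, hpA⟩ := hpP
  obtain ⟨hqlt, hqA⟩ := hqP
  have hpii : p < ii.1 := by
    rcases lt_or_eq_of_le hple with h | h
    · exact h
    · exfalso
      apply hiiA
      have : (⟨p, hplt⟩ : Fin l.length) = ii := Fin.ext h
      rwa [this] at hpA
  have hqjj : q < jj.1 := by
    rcases lt_or_eq_of_le hqle with h | h
    · exact h
    · exfalso
      have : (⟨q, hqlt⟩ : Fin l.length) = jj := Fin.ext h
      rw [this] at hqA
      exact hBnA _ hjjB hqA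
  have hpq : p < q := by
    have := h2.trans h3
    omega
  -- the complement of A is closed under cycles
  set Sstar : Set ι := {x | x ∉ A} with hSdef
  have hSc : G.CycClosed hc Sstar := by
    intro e he f hf hfA
    apply he
    show e ∈ A
    rw [hAdef, ← cycF_eq_of_mem hc hfA, cycF_eq_of_mem hc hf]
    exact cycF_mem hc e
  -- walks along segments of the circuit
  have seg : ∀ (p1 : ℕ) (hp1 : p1 < l.length) (p2 : ℕ) (hp2 : p2 < l.length),
      p1 < p2 → (∀ t (h : t < l.length), p1 < t → t < p2 → l.get ⟨t, h⟩ ∉ A) →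
      G.DReach Sstar (G.tgt (l.get ⟨p1, hp1⟩)) (G.src (l.get ⟨p2, hp2⟩)) := by
    intro p1 hp1 p2 hp2 hlt havoid
    have h1 : p1 + 1 < l.length := by omega
    have htgt : G.tgt (l.get ⟨p1, hp1⟩) = G.src (l.get ⟨p1+1, h1⟩) :=
      isWalk_get hlw p1 h1
    have hdw := isWalk_drop hlw (p1+1) h1
    have hlen : p2 - (p1+1) < (l.drop (p1+1)).length := by
      rw [List.length_drop]; omega
    have htk := isWalk_take hdw (p2 - (p1+1)) hlen
    have hgd : (l.drop (p1+1)).get ⟨p2 - (p1+1), hlen⟩ = l.get ⟨p2, hp2⟩ := by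
      simp only [List.get_eq_getElem, List.getElem_drop]
      congr 1
      omega
    refine ⟨(l.drop (p1+1)).take (p2 - (p1+1)), by rw [hgd, ← htgt] at htk; exact htk, ?_⟩
    intro f hf
    obtain ⟨kf, hkget⟩ := List.mem_iff_get.mp hf
    obtain ⟨kv, hkb⟩ := kf
    have hkb1 : kv < p2 - (p1 + 1) := by
      have := hkb
      simp only [List.length_take, List.length_drop] at this
      omega
    have hkb2 : p1 + 1 + kv < l.length := by omega
    have hfget : f = l.get ⟨p1 + 1 + kv, hkb2⟩ := by
      rw [← hkget]
      simp only [List.get_eq_getElem, List.getElem_take, List.getElem_drop]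
    show f ∉ A
    rw [hfget]
    exact havoid _ _ (by omega) (by omega)
  have seg1 : G.DReach Sstar (G.tgt (l.get ⟨p, hplt⟩)) (G.src (l.get ii)) := by
    have hres := seg p hplt ii.1 ii.2 hpii (fun t h ht1 ht2 hmem =>
      Nat.findGreatest_is_greatest (P := P) (n := ii.1) ht1 (by omega)
        (show P t from ⟨h, hmem⟩))
    have : (⟨ii.1, ii.2⟩ : Fin l.length) = ii := Fin.ext rfl
    rwa [this] at hres
  have seg2 : G.DReach Sstar (G.tgt (l.get ⟨q, hqlt⟩)) (G.src (l.get jj)) := by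
    have hres := seg q hqlt jj.1 jj.2 hqjj (fun t h ht1 ht2 hmem =>
      Nat.findGreatest_is_greatest (P := P) (n := jj.1) ht1 (by omega)
        (show P t from ⟨h, hmem⟩))
    have : (⟨jj.1, jj.2⟩ : Fin l.length) = jj := Fin.ext rfl
    rwa [this] at hres
  -- connection within the cycle B
  obtain ⟨bL, hbLS, hbLF⟩ := cycF_cycle hc (l.get ii)
  obtain ⟨hbne, hbnd, ub, hbw⟩ := isCircuitList_iff.mp hbLS.1
  have hiib : l.get ii ∈ bL :=
    List.mem_toFinset.mp (by rw [hbLF]; exact hiiB)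
  have hjjb : l.get jj ∈ bL :=
    List.mem_toFinset.mp (by rw [hbLF]; exact hjjB)
  have hbSs : ∀ x ∈ bL, x ∈ Sstar := by
    intro x hx
    exact hBnA x (by show x ∈ G.cycF hc (l.get ii); rw [← hbLF]; exact List.mem_toFinset.mpr hx)
  obtain ⟨t1, hw1, hs1⟩ := walk_from_mem hbw hiib
  obtain ⟨t2, hw2, hs2⟩ := walk_from_mem hbw hjjb
  have r1 : G.DReach Sstar (G.src (l.get ii)) ub :=
    ⟨_, hw1, fun x hx => hbSs x (hs1 x hx)⟩
  have r2 : G.DReach Sstar (G.src (l.get jj)) ub :=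
    ⟨_, hw2, fun x hx => hbSs x (hs2 x hx)⟩
  have rB : G.DReach Sstar (G.src (l.get ii)) (G.src (l.get jj)) :=
    r1.trans (dreach_symm hc hSc r2)
  have chain : G.DReach Sstar (G.tgt (l.get ⟨p, hplt⟩)) (G.tgt (l.get ⟨q, hqlt⟩)) :=
    (seg1.trans rB).trans (dreach_symm hc hSc seg2)
  -- separation forces the two targets to coincide
  have hpaL : l.get ⟨p, hplt⟩ ∈ aL :=
    List.mem_toFinset.mp (by rw [haLF]; exact hpA)
  have hqaL : l.get ⟨q, hqlt⟩ ∈ aL :=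
    List.mem_toFinset.mp (by rw [haLF]; exact hqA)
  obtain ⟨Wl, hWw, hWs⟩ := chain
  have heq : G.tgt (l.get ⟨p, hplt⟩) = G.tgt (l.get ⟨q, hqlt⟩) :=
    separation hc haLS Wl _ _ (tgt_mem_srcs haw hpaL) (tgt_mem_srcs haw hqaL)
      hWw (fun x hx hxa => (hWs x hx)
        (show x ∈ A by
          show x ∈ G.cycF hc (l.get i)
          rw [← haLF]; exact List.mem_toFinset.mpr hxa))
  have hmaptgtA : (aL.map G.tgt).Nodup := nodup_map_tgt haw hasrc
  have hnepq : l.get ⟨p, hplt⟩ ≠ l.get ⟨q, hqlt⟩ := by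
    intro hEq
    have hfin : (⟨p, hplt⟩ : Fin l.length) = ⟨q, hqlt⟩ :=
      List.nodup_iff_injective_get.mp hlnd hEq
    have : p = q := congrArg Fin.val hfin
    omega
  exact hnepq (List.inj_on_of_nodup_map hmaptgtA hpaL hqaL heq)

lemma part2_blocks (hc : G.HC) {l : List ι} (i : Fin l.length) :
    ∃ l' : List ι, G.IsSimpleCycleList l' ∧ l.get i ∈ l' ∧
      ∀ j : Fin l.length,
        (l.get j ∈ l' ↔ G.SameSimpleCycle (l.get i) (l.get j)) := by
  obtain ⟨aL, hS, hF⟩ := cycF_cycle hc (l.get i)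
  refine ⟨aL, hS, List.mem_toFinset.mp (by rw [hF]; exact cycF_mem hc _), fun j => ?_⟩
  rw [sameSimpleCycle_iff hc, ← hF, List.mem_toFinset]

end MGraph
/-- In a well-oriented forest of cacti (each edge lies on exactly one simple
cycle, and cycles follow the orientations), every connected component forms a
circuit following the orientations, and for an Eulerian circuit
`c = (e₁,…,e_n)` the partition of `{1,…,n}` given by "same simple cycle" is a
noncrossing partition whose blocks are exactly the edge sets of the simple
cycles. -/
theorem forest_of_cacti_euler_noncrossing (ι : Type) [Fintype ι]
    [DecidableEq ι] (G : MGraph ι)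
    (hcactus : ∀ e : ι, ∃ s : Finset ι,
      ((∃ l, G.IsSimpleCycleList l ∧ l.toFinset = s) ∧ e ∈ s) ∧
      ∀ s' : Finset ι, (∃ l, G.IsSimpleCycleList l ∧ l.toFinset = s') →
        e ∈ s' → s' = s) :
    -- every connected component (containing an edge) carries an Eulerian
    -- circuit following the orientations:
    (∀ e₀ : ι, ∃ l : List ι, G.IsCircuitList l ∧ e₀ ∈ l ∧
      l.toFinset = Finset.univ.filter (fun e : ι =>
        (G.reachSetoid Set.univ).r (G.ends e).1 (G.ends e₀).1)) ∧
    -- along any Eulerian circuit, the simple cycles form a noncrossing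
    -- partition whose blocks are the edge sets of the simple cycles:
    (∀ l : List ι, G.IsCircuitList l → l.toFinset = Finset.univ →
      (¬ ∃ i ii j jj : Fin l.length, i < ii ∧ ii < j ∧ j < jj ∧
        G.SameSimpleCycle (l.get i) (l.get j) ∧
        G.SameSimpleCycle (l.get ii) (l.get jj) ∧
        ¬ G.SameSimpleCycle (l.get i) (l.get ii)) ∧
      (∀ i : Fin l.length, ∃ l' : List ι, G.IsSimpleCycleList l' ∧
        l.get i ∈ l' ∧
        ∀ j : Fin l.length,
          (l.get j ∈ l' ↔ G.SameSimpleCycle (l.get i) (l.get j)))) := by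
  have hc : G.HC := hcactus
  exact ⟨fun e₀ => MGraph.part1 hc e₀,
    fun l hl _ => ⟨MGraph.part2_nc hc hl, fun i => MGraph.part2_blocks hc i⟩⟩
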